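/- arXiv:1003.3820 — 2 statements merged into one kernel-verified Lean document; each statement's English description precedes it below -/
import Mathlib

section
/- In a double groupoid satisfying the filling condition, the relation on objects defined by 'a is connected to b if there exist a horizontal morphism g and a vertical morphism u with source of g equal to target of u, target of g equal to b, and source of u equal to a' is an equivalence relation. -/
/-! ## Double categories and double groupoids (combinatorial formalization)

A double category is given by objects, horizontal morphisms `H a b` (from `a` to `b`),
vertical morphisms `V a b`, and squares `Sq f g u w` where `f : H a c` is the bottom
(vertical-source) edge, `g : H b d` the top (vertical-target) edge, `u : V a b` the
horizontal-source edge and `w : V c d` the horizontal-target edge. -/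

universe u₁ u₂ u₃ u₄

/-- The operations of a (small) double category: the four compositions and identities. -/
structure DCS (Ob : Type u₁) (H : Ob → Ob → Type u₂) (V : Ob → Ob → Type u₃)
    (Sq : ∀ ⦃a b c d : Ob⦄, H a c → H b d → V a b → V c d → Type u₄) where
  hComp : ∀ {a b c : Ob}, H b c → H a b → H a c
  hId : ∀ a : Ob, H a a
  vComp : ∀ {a b c : Ob}, V b c → V a b → V a c
  vId : ∀ a : Ob, V a a
  /-- horizontal composition of squares (along a common vertical edge) -/
  hCompSq : ∀ {a b c d a' b' : Ob} {f : H a c} {g : H b d} {u : V a b} {w : V c d}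
    {f' : H a' a} {g' : H b' b} {u' : V a' b'},
    Sq f g u w → Sq f' g' u' u → Sq (hComp f f') (hComp g g') u' w
  /-- vertical composition of squares (along a common horizontal edge) -/
  vCompSq : ∀ {a b c d a₀ c₀ : Ob} {f : H a c} {g : H b d} {u : V a b} {w : V c d}
    {f₀ : H a₀ c₀} {u₀ : V a₀ a} {w₀ : V c₀ c},
    Sq f g u w → Sq f₀ f u₀ w₀ → Sq f₀ g (vComp u u₀) (vComp w w₀)
  /-- the horizontal identity square `I^h u` on a vertical morphism -/
  idSqH : ∀ {a b : Ob} (u : V a b), Sq (hId a) (hId b) u u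
  /-- the vertical identity square `I^v f` on a horizontal morphism -/
  idSqV : ∀ {a c : Ob} (f : H a c), Sq f f (vId a) (vId c)

/-- The operations of a double groupoid: a double category together with inverses
for horizontal and vertical morphisms and for squares in both directions. -/
structure DGS (Ob : Type u₁) (H : Ob → Ob → Type u₂) (V : Ob → Ob → Type u₃)
    (Sq : ∀ ⦃a b c d : Ob⦄, H a c → H b d → V a b → V c d → Type u₄) extends
    DCS Ob H V Sq where
  hInv : ∀ {a b : Ob}, H a b → H b a
  vInv : ∀ {a b : Ob}, V a b → V b a
  hInvSq : ∀ {a b c d : Ob} {f : H a c} {g : H b d} {u : V a b} {w : V c d},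
    Sq f g u w → Sq (hInv f) (hInv g) w u
  vInvSq : ∀ {a b c d : Ob} {f : H a c} {g : H b d} {u : V a b} {w : V c d},
    Sq f g u w → Sq g f (vInv u) (vInv w)

namespace DCS

variable {Ob : Type u₁} {H : Ob → Ob → Type u₂} {V : Ob → Ob → Type u₃}
  {Sq : ∀ ⦃a b c d : Ob⦄, H a c → H b d → V a b → V c d → Type u₄}

/-- The axioms of a double category (associativity, identities, compatibility of
identity squares with compositions, and the interchange law).  Since the types of
squares depend on their boundaries, some equations are stated as `HEq`. -/
structure Lawful (D : DCS Ob H V Sq) : Prop where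
  hAssoc : ∀ {a b c d : Ob} (f : H c d) (g : H b c) (h : H a b),
    D.hComp (D.hComp f g) h = D.hComp f (D.hComp g h)
  hIdLeft : ∀ {a b : Ob} (f : H a b), D.hComp (D.hId b) f = f
  hIdRight : ∀ {a b : Ob} (f : H a b), D.hComp f (D.hId a) = f
  vAssoc : ∀ {a b c d : Ob} (u : V c d) (v : V b c) (w : V a b),
    D.vComp (D.vComp u v) w = D.vComp u (D.vComp v w)
  vIdLeft : ∀ {a b : Ob} (u : V a b), D.vComp (D.vId b) u = u
  vIdRight : ∀ {a b : Ob} (u : V a b), D.vComp u (D.vId a) = u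
  sqHAssoc : ∀ {a b c d a' b' a'' b'' : Ob} {f : H a c} {g : H b d} {u : V a b} {w : V c d}
    {f' : H a' a} {g' : H b' b} {u' : V a' b'} {f'' : H a'' a'} {g'' : H b'' b'}
    {u'' : V a'' b''} (α : Sq f g u w) (β : Sq f' g' u' u) (γ : Sq f'' g'' u'' u'),
    HEq (D.hCompSq (D.hCompSq α β) γ) (D.hCompSq α (D.hCompSq β γ))
  sqHIdLeft : ∀ {a b c d : Ob} {f : H a c} {g : H b d} {u : V a b} {w : V c d}
    (α : Sq f g u w), HEq (D.hCompSq (D.idSqH w) α) α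
  sqHIdRight : ∀ {a b c d : Ob} {f : H a c} {g : H b d} {u : V a b} {w : V c d}
    (α : Sq f g u w), HEq (D.hCompSq α (D.idSqH u)) α
  sqVAssoc : ∀ {a b c d a₀ c₀ a₁ c₁ : Ob} {f : H a c} {g : H b d} {u : V a b} {w : V c d}
    {f₀ : H a₀ c₀} {u₀ : V a₀ a} {w₀ : V c₀ c} {f₁ : H a₁ c₁} {u₁ : V a₁ a₀} {w₁ : V c₁ c₀}
    (α : Sq f g u w) (β : Sq f₀ f u₀ w₀) (γ : Sq f₁ f₀ u₁ w₁),
    HEq (D.vCompSq (D.vCompSq α β) γ) (D.vCompSq α (D.vCompSq β γ))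
  sqVIdLeft : ∀ {a b c d : Ob} {f : H a c} {g : H b d} {u : V a b} {w : V c d}
    (α : Sq f g u w), HEq (D.vCompSq (D.idSqV g) α) α
  sqVIdRight : ∀ {a b c d : Ob} {f : H a c} {g : H b d} {u : V a b} {w : V c d}
    (α : Sq f g u w), HEq (D.vCompSq α (D.idSqV f)) α
  idSqDiag : ∀ a : Ob, D.idSqH (D.vId a) = D.idSqV (D.hId a)
  idSqVComp : ∀ {a a' c : Ob} (f : H a c) (f' : H a' a),
    D.idSqV (D.hComp f f') = D.hCompSq (D.idSqV f) (D.idSqV f')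
  idSqHComp : ∀ {a a₀ b : Ob} (u : V a b) (u₀ : V a₀ a),
    D.idSqH (D.vComp u u₀) = D.vCompSq (D.idSqH u) (D.idSqH u₀)
  interchange : ∀ {a b c d a' b' a₀ c₀ a₀' : Ob}
    {f : H a c} {g : H b d} {u : V a b} {w : V c d}
    {f' : H a' a} {g' : H b' b} {u' : V a' b'}
    {f₀ : H a₀ c₀} {u₀ : V a₀ a} {w₀ : V c₀ c}
    {f₀' : H a₀' a₀} {u₀' : V a₀' a'} -- bottom-right square with top edge f'
    (α : Sq f g u w) (β : Sq f' g' u' u) (γ : Sq f₀ f u₀ w₀) (δ : Sq f₀' f' u₀' u₀),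
    D.vCompSq (D.hCompSq α β) (D.hCompSq γ δ) =
      D.hCompSq (D.vCompSq α γ) (D.vCompSq β δ)

/-- The *filling condition*: for every horizontal morphism `g` (the prospective
vertical target) and every vertical morphism `u` (the prospective horizontal source)
with `s^h g = t^v u`, there is a square with horizontal source `u` and vertical
target `g`. -/
def Filling (_ : DCS Ob H V Sq) : Prop :=
  ∀ {a b d : Ob} (g : H b d) (u : V a b),
    ∃ (c : Ob) (f : H a c) (w : V c d), Nonempty (Sq f g u w)

end DCS

namespace DGS

variable {Ob : Type u₁} {H : Ob → Ob → Type u₂} {V : Ob → Ob → Type u₃}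
  {Sq : ∀ ⦃a b c d : Ob⦄, H a c → H b d → V a b → V c d → Type u₄}

/-- The axioms of a double groupoid: a lawful double category in which the given
inversion operations really are two-sided inverses, for morphisms and for squares. -/
structure Lawful (D : DGS Ob H V Sq) : Prop where
  toLawfulDCS : D.toDCS.Lawful
  hInvLeft : ∀ {a b : Ob} (f : H a b), D.hComp (D.hInv f) f = D.hId a
  hInvRight : ∀ {a b : Ob} (f : H a b), D.hComp f (D.hInv f) = D.hId b
  vInvLeft : ∀ {a b : Ob} (u : V a b), D.vComp (D.vInv u) u = D.vId a
  vInvRight : ∀ {a b : Ob} (u : V a b), D.vComp u (D.vInv u) = D.vId b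
  sqHInvRight : ∀ {a b c d : Ob} {f : H a c} {g : H b d} {u : V a b} {w : V c d}
    (α : Sq f g u w), HEq (D.hCompSq α (D.hInvSq α)) (D.idSqH w)
  sqHInvLeft : ∀ {a b c d : Ob} {f : H a c} {g : H b d} {u : V a b} {w : V c d}
    (α : Sq f g u w), HEq (D.hCompSq (D.hInvSq α) α) (D.idSqH u)
  sqVInvRight : ∀ {a b c d : Ob} {f : H a c} {g : H b d} {u : V a b} {w : V c d}
    (α : Sq f g u w), HEq (D.vCompSq α (D.vInvSq α)) (D.idSqV g)
  sqVInvLeft : ∀ {a b c d : Ob} {f : H a c} {g : H b d} {u : V a b} {w : V c d}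
    (α : Sq f g u w), HEq (D.vCompSq (D.vInvSq α) α) (D.idSqV f)

end DGS

/-- Two objects `a, b` of a double groupoid are *connected* when there is a pair
`(g, u)` consisting of a horizontal morphism `g` and a vertical morphism `u` with
`s^h g = t^v u`, `t^h g = b` and `s^v u = a`. -/
def DCS.Connected {Ob : Type u₁} {H : Ob → Ob → Type u₂} {V : Ob → Ob → Type u₃}
    {Sq : ∀ ⦃a b c d : Ob⦄, H a c → H b d → V a b → V c d → Type u₄}
    (_ : DCS Ob H V Sq) (a b : Ob) : Prop :=
  ∃ x : Ob, Nonempty (H x b) ∧ Nonempty (V a x)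

/-- In a double groupoid satisfying the filling condition, the
connectedness relation on objects is an equivalence relation. -/
theorem connected_equivalence {Ob : Type u₁} {H : Ob → Ob → Type u₂} {V : Ob → Ob → Type u₃}
    {Sq : ∀ ⦃a b c d : Ob⦄, H a c → H b d → V a b → V c d → Type u₄}
    (D : DGS Ob H V Sq) (hD : D.Lawful) (hfill : D.toDCS.Filling) :
    Equivalence D.toDCS.Connected := by
  constructor
  · intro a
    exact ⟨a, ⟨D.hId a⟩, ⟨D.vId a⟩⟩
  · rintro a b ⟨x, ⟨g⟩, ⟨u⟩⟩
    obtain ⟨c, f, w, ⟨-⟩⟩ := hfill g u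
    exact ⟨c, ⟨D.hInv f⟩, ⟨D.vInv w⟩⟩
  · rintro a b c ⟨x, ⟨g⟩, ⟨u⟩⟩ ⟨y, ⟨g'⟩, ⟨u'⟩⟩
    obtain ⟨z, f, w, ⟨-⟩⟩ := hfill g u
    obtain ⟨m, f₂, w₂, ⟨-⟩⟩ := hfill g' (D.vComp u' w)
    obtain ⟨p, f₃, w₃, ⟨-⟩⟩ := hfill (D.hInv (D.hComp f₂ f)) (D.vInv w₂)
    exact ⟨p, ⟨D.hInv f₃⟩, ⟨D.vInv w₃⟩⟩
end

section
/- In a Kan complex L, if y, y' : Δ[n+1] → L are simplices such that the homotopy classes [y d^i] = [y' d^i] agree for all faces i ≠ k, then also [y d^k] = [y' d^k]. -/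
/-!
Every horn below has its first faces agreeing, up to their last faces, with the faces of one
fixed simplex, which makes it compatible except possibly against its last face. If `k` is not
last, one horn built from degeneracies of `y` and the homotopy of last faces replaces the last
face of `y` by that of `y'`; a second horn made of the given homotopies, this new simplex and
`y'` is then filled, and its `k`-th face is the required homotopy. If `k` is last, a horn made of
the homotopies and `y'` yields `w` agreeing with `y` except for its last face `y' dᵏ`, and a horn
built from degeneracies of `y` and from `w` gives a homotopy from `y dᵏ` to `w dᵏ`.
-/

open CategoryTheory Simplicial Opposite

namespace SSet

/-- The `m`-simplex of `L` which is constant at a vertex `a`. -/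
def vertexSimplex (L : SSet.{u}) (a : L _⦋0⦌) (m : ℕ) : L _⦋m⦌ :=
  L.map (SimplexCategory.const ⦋m⦌ ⦋0⦌ 0).op a

/-- Two `n`-simplices have the same faces.  (The quantification over `m` with
`n = m + 1` makes the statement meaningful also for `n = 0`, where it is vacuous.) -/
def SameFaces (L : SSet.{u}) {n : ℕ} (x x' : L _⦋n⦌) : Prop :=
  ∀ (m : ℕ) (hm : n = m + 1) (i : Fin (m + 2)),
    L.δ i (cast (show L _⦋n⦌ = L _⦋m + 1⦌ by rw [hm]) x) =
      L.δ i (cast (show L _⦋n⦌ = L _⦋m + 1⦌ by rw [hm]) x')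

/-- Homotopy of `n`-simplices in a simplicial set: `x` and `x'` have the same faces
and there is an `(n+1)`-simplex `y` with boundary
`(x d⁰ sⁿ⁻¹, …, x dⁿ⁻¹ sⁿ⁻¹, x, x')`. -/
def Homotopic (L : SSet.{u}) {n : ℕ} (x x' : L _⦋n⦌) : Prop :=
  SameFaces L x x' ∧
  ∃ y : L _⦋n + 1⦌,
    L.δ (⟨n, by omega⟩ : Fin (n + 2)) y = x ∧
    L.δ (Fin.last (n + 1)) y = x' ∧
    ∀ (m : ℕ) (hm : n = m + 1) (i : Fin (n + 2)) (hi : (i : ℕ) < n),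
      L.δ i y =
        cast (show L _⦋m + 1⦌ = L _⦋n⦌ by rw [hm])
          (L.σ (Fin.last m)
            (L.δ (⟨i, by omega⟩ : Fin (m + 2))
              (cast (show L _⦋n⦌ = L _⦋m + 1⦌ by rw [hm]) x)))

/-- All faces of the `n`-simplex `x` are (degeneracies of) the vertex `a`. -/
def FacesAt (L : SSet.{u}) {n : ℕ} (x : L _⦋n⦌) (a : L _⦋0⦌) : Prop :=
  ∀ (m : ℕ) (hm : n = m + 1) (i : Fin (m + 2)),
    L.δ i (cast (show L _⦋n⦌ = L _⦋m + 1⦌ by rw [hm]) x) = vertexSimplex L a m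

/-- Triviality of the `n`-th homotopy group of `L` at every base vertex:  every
`n`-simplex all of whose faces are constant at a vertex `a` is homotopic to the
constant `n`-simplex at `a`. -/
def PiTrivial (L : SSet.{u}) (n : ℕ) : Prop :=
  ∀ (a : L _⦋0⦌) (x : L _⦋n⦌), FacesAt L x a → Homotopic L x (vertexSimplex L a n)


/-- Triviality of `π₂` at every base vertex of a simplicial set. -/
def Pi2Trivial (L : SSet.{u}) : Prop :=
  ∀ (a : L _⦋0⦌) (x : L _⦋2⦌),
    (∀ i : Fin 3, L.δ i x = vertexSimplex L a 1) → Homotopic L x (vertexSimplex L a 2)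

/-- Kan complexes with the meaning `SSet.KanComplex` had in the older Mathlib:
every horn `Λ[n, i] ⟶ S` (for every `n`, including `n = 0`) extends to `Δ[n]`. -/
class OldKanComplex (S : SSet.{u}) : Prop where
  hornFilling : ∀ ⦃n : ℕ⦄ ⦃i : Fin (n + 1)⦄ (σ₀ : (Λ[n, i] : SSet.{u}) ⟶ S),
    ∃ σ : Δ[n] ⟶ S, σ₀ = Λ[n, i].ι ≫ σ

end SSet

namespace SSet

variable {L : SSet.{u}}

def AgreeExceptLast {n : ℕ} (a b : L _⦋n + 1⦌) : Prop :=
  ∀ i : Fin (n + 1), L.δ i.castSucc a = L.δ i.castSucc b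

/-- The boundary condition of `Homotopic`, with the degenerate faces `x dⁱ sⁿ⁻¹ = x sⁿ dⁱ` read
off `x sⁿ`, so that no case split on `n` is needed. -/
def IsHomotopy {n : ℕ} (H : L _⦋n + 1⦌) (x x' : L _⦋n⦌) : Prop :=
  AgreeExceptLast H (L.σ (Fin.last n) x) ∧ L.δ (Fin.last (n + 1)) H = x'

lemma σ_last_δ_castSucc {n : ℕ} (y : L _⦋n + 1⦌) (j : Fin (n + 1)) :
    L.σ (Fin.last n) (L.δ j.castSucc y) = L.δ j.castSucc.castSucc (L.σ (Fin.last (n + 1)) y) :=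
  (δ_comp_σ_of_le_apply (Fin.castSucc_le_castSucc_iff.mpr (Fin.le_last j)) y).symm

lemma δ_last_δ_castSucc_σ {n : ℕ} (y : L _⦋n + 1⦌) (j : Fin (n + 2)) :
    L.δ (Fin.last (n + 1)) (L.δ j.castSucc (L.σ (Fin.last n).castSucc y)) =
      L.δ j (L.σ (Fin.last n) (L.δ (Fin.last (n + 1)) y)) := by
  rw [← δ_comp_δ_apply (Fin.le_last j), δ_comp_σ_of_gt_apply (Fin.castSucc_lt_last _)]

lemma δ_castSucc_last_σ_castSucc_last {n : ℕ} (y : L _⦋n + 1⦌) :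
    L.δ (Fin.last (n + 1)).castSucc (L.σ (Fin.last n).castSucc y) = y :=
  δ_comp_σ_succ'_apply (by rw [Fin.succ_castSucc, Fin.succ_last]) y

lemma IsHomotopy.sameFaces {n : ℕ} {H : L _⦋n + 1⦌} {x x' : L _⦋n⦌} (hH : IsHomotopy H x x') :
    SameFaces L x x' := by
  rintro m rfl i
  rw [cast_eq, cast_eq, ← hH.2, ← Fin.succ_last, δ_comp_δ_apply (Fin.le_last i), hH.1 i,
    ← δ_comp_δ_apply (Fin.le_last i), δ_comp_σ_succ_apply]

lemma homotopic_iff_exists_isHomotopy {n : ℕ} (x x' : L _⦋n⦌) :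
    Homotopic L x x' ↔ ∃ H, IsHomotopy H x x' := by
  constructor
  · rintro ⟨-, H, hx, hx', hdeg⟩
    refine ⟨H, fun i => ?_, hx'⟩
    induction i using Fin.lastCases with
    | last => exact hx.trans (δ_comp_σ_self_apply _ x).symm
    | cast i =>
      obtain _ | m := n
      · exact i.elim0
      exact (hdeg m rfl _ i.isLt).trans (σ_last_δ_castSucc x i)
  · rintro ⟨H, hH⟩
    refine ⟨hH.sameFaces, H, (hH.1 (Fin.last n)).trans (δ_comp_σ_self_apply _ x), hH.2, ?_⟩
    rintro m rfl i hi
    obtain ⟨i, rfl⟩ : ∃ i' : Fin (m + 1), i'.castSucc.castSucc = i := ⟨⟨i, hi⟩, rfl⟩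
    exact (hH.1 i.castSucc).trans (σ_last_δ_castSucc x i).symm

lemma exists_δ_eq_of_isCompatible [L.OldKanComplex] {n : ℕ} (k : Fin (n + 3))
    (f : Fin (n + 3) → L _⦋n + 1⦌)
    (hf : ∀ (j l : Fin (n + 3)) (hjl : j < l), j ≠ k → l ≠ k →
      L.δ (l.pred (Fin.ne_zero_of_lt hjl)) (f j) = L.δ (j.castPred (Fin.ne_last_of_lt hjl)) (f l)) :
    ∃ G : L _⦋n + 2⦌, ∀ j, j ≠ k → L.δ j G = f j := by
  have hc : horn.IsCompatible (i := k) (fun j _ => yonedaEquiv.symm (f j)) := by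
    intro j l hj hl hjl
    simp only [stdSimplex.δ_comp_yonedaEquiv_symm, hf j l hjl hj hl]
  obtain ⟨φ, hφ⟩ := hc.exists_desc
  obtain ⟨σ, rfl⟩ := OldKanComplex.hornFilling φ
  refine ⟨yonedaEquiv σ, fun j hj => ?_⟩
  rw [← stdSimplex.yonedaEquiv_δ_comp, ← horn.ι_ι k j hj, Category.assoc, hφ j hj,
    Equiv.apply_symm_apply]

/-- Two of the first `n + 2` faces meet along non-last faces, where they agree with the
corresponding faces of `Z`; hence only the compatibilities with `y'` need to be assumed. -/
lemma exists_filler_of_agreeExceptLast [L.OldKanComplex] {n : ℕ} (k : Fin (n + 3))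
    (Z : L _⦋n + 2⦌) (x : Fin (n + 2) → L _⦋n + 1⦌) (y' : L _⦋n + 1⦌)
    (hx : ∀ j, j.castSucc ≠ k → AgreeExceptLast (x j) (L.δ j.castSucc Z))
    (hy' : ∀ j, j.castSucc ≠ k → Fin.last _ ≠ k → L.δ (Fin.last _) (x j) = L.δ j y') :
    ∃ G : L _⦋n + 2⦌, (∀ j, j.castSucc ≠ k → L.δ j.castSucc G = x j) ∧
      (Fin.last _ ≠ k → L.δ (Fin.last _) G = y') := by
  obtain ⟨G, hG⟩ := exists_δ_eq_of_isCompatible k (Fin.lastCases y' x) (by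
    intro j l hjl hj hl
    obtain ⟨j, rfl⟩ := Fin.exists_castSucc_eq.mpr (Fin.ne_last_of_lt hjl)
    induction l using Fin.lastCases with
    | last => simpa [Fin.pred_last] using hy' j hj hl
    | cast l =>
      have hjl' : j < l := Fin.castSucc_lt_castSucc_iff.mp hjl
      obtain ⟨j, rfl⟩ := Fin.exists_castSucc_eq.mpr (Fin.ne_last_of_lt hjl')
      have hl0 : l ≠ 0 := Fin.ne_zero_of_lt hjl'
      simp only [Fin.lastCases_castSucc, Fin.castPred_castSucc]
      rw [← Fin.castSucc_pred_eq_pred_castSucc hl0, hx _ hj, hx _ hl,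
        Fin.castSucc_pred_eq_pred_castSucc hl0, δ_comp_δ'_apply hjl])
  exact ⟨G, fun j hj => by simpa using hG _ hj, fun h => by simpa using hG _ h⟩

lemma exists_agreeExceptLast_δ_castSucc [L.OldKanComplex] {n : ℕ} (k : Fin (n + 2))
    (Z : L _⦋n + 2⦌) (x : Fin (n + 2) → L _⦋n + 1⦌) (y' : L _⦋n + 1⦌)
    (hx : ∀ j, j ≠ k → AgreeExceptLast (x j) (L.δ j.castSucc Z))
    (hy' : ∀ j, j ≠ k → L.δ (Fin.last _) (x j) = L.δ j y') :
    ∃ w, AgreeExceptLast w (L.δ k.castSucc Z) ∧ L.δ (Fin.last _) w = L.δ k y' := by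
  obtain ⟨G, hG, hGlast⟩ := exists_filler_of_agreeExceptLast k.castSucc Z x y'
    (fun j hj => hx j (ne_of_apply_ne Fin.castSucc hj))
    (fun j hj _ => hy' j (ne_of_apply_ne Fin.castSucc hj))
  refine ⟨L.δ k.castSucc G, fun i => ?_, ?_⟩
  · rcases lt_or_ge i.castSucc k with hik | hki
    · have hik' : i.castSucc.castSucc < k.castSucc := Fin.castSucc_lt_castSucc_iff.mpr hik
      rw [δ_comp_δ'_apply hik', δ_comp_δ'_apply hik',
        hG _ ((Fin.castSucc_injective _).ne hik.ne),
        ← Fin.castSucc_pred_eq_pred_castSucc (Fin.ne_zero_of_lt hik), hx _ hik.ne]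
    · obtain ⟨k, rfl⟩ :=
        Fin.exists_castSucc_eq.mpr (Fin.ne_last_of_lt (hki.trans_lt i.castSucc_lt_last))
      have hik : i.succ ≠ k.castSucc := (hki.trans_lt Fin.castSucc_lt_succ).ne'
      rw [← δ_comp_δ_apply hki, ← δ_comp_δ_apply hki, Fin.succ_castSucc,
        hG _ ((Fin.castSucc_injective _).ne hik), hx _ hik]
  · rw [← δ_comp_δ_apply (Fin.le_last k), Fin.succ_last, hGlast (Fin.castSucc_ne_last k).symm]

lemma exists_agreeExceptLast_δ_σ_of_isHomotopy [L.OldKanComplex] {n : ℕ} (k : Fin (n + 2))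
    (y y' : L _⦋n + 1⦌) (H : Fin (n + 1) → L _⦋n + 1⦌)
    (hH : ∀ j, j.castSucc ≠ k → IsHomotopy (H j) (L.δ j.castSucc y) (L.δ j.castSucc y'))
    (hlast : k ≠ Fin.last _ → L.δ (Fin.last _) y = L.δ (Fin.last _) y') :
    ∃ w, AgreeExceptLast w (L.δ k.castSucc (L.σ (Fin.last _) y)) ∧
      L.δ (Fin.last _) w = L.δ k y' := by
  refine exists_agreeExceptLast_δ_castSucc k _ (Fin.lastCases y H) y'
    (fun j hj => ?_) (fun j hj => ?_)
  · induction j using Fin.lastCases with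
    | last => simp only [Fin.lastCases_last, δ_comp_σ_self_apply]; exact fun _ => rfl
    | cast j => simpa only [Fin.lastCases_castSucc, ← σ_last_δ_castSucc] using (hH j hj).1
  · induction j using Fin.lastCases with
    | last => simpa only [Fin.lastCases_last] using hlast hj.symm
    | cast j => simpa only [Fin.lastCases_castSucc] using (hH j hj).2

lemma exists_isHomotopy_δ_castSucc [L.OldKanComplex] {n : ℕ} (k : Fin (n + 1))
    (y y' : L _⦋n + 1⦌) (H : Fin (n + 1) → L _⦋n + 1⦌)
    (hH : ∀ j, j ≠ k → IsHomotopy (H j) (L.δ j.castSucc y) (L.δ j.castSucc y'))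
    (hlast : L.δ (Fin.last _) y = L.δ (Fin.last _) y') :
    ∃ G, IsHomotopy G (L.δ k.castSucc y) (L.δ k.castSucc y') := by
  obtain ⟨G, hG, hGlast⟩ := exists_agreeExceptLast_δ_σ_of_isHomotopy k.castSucc y y' H
    (fun j hj => hH j (ne_of_apply_ne Fin.castSucc hj)) (fun _ => hlast)
  exact ⟨G, by rwa [← σ_last_δ_castSucc] at hG, hGlast⟩

lemma exists_agreeExceptLast_of_isHomotopy_δ [L.OldKanComplex] {n : ℕ}
    (y y' : L _⦋n + 1⦌) (H : Fin (n + 1) → L _⦋n + 1⦌)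
    (hH : ∀ j, IsHomotopy (H j) (L.δ j.castSucc y) (L.δ j.castSucc y')) :
    ∃ w, AgreeExceptLast w y ∧ L.δ (Fin.last _) w = L.δ (Fin.last _) y' := by
  obtain ⟨w, hw, hwlast⟩ := exists_agreeExceptLast_δ_σ_of_isHomotopy (Fin.last _) y y' H
    (fun j _ => hH j) (fun h => (h rfl).elim)
  exact ⟨w, by rwa [δ_comp_σ_self_apply] at hw, hwlast⟩

lemma exists_agreeExceptLast_of_isHomotopy_δ_last [L.OldKanComplex] {n : ℕ}
    {y : L _⦋n + 1⦌} {H : L _⦋n + 1⦌} {x' : L _⦋n⦌}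
    (hH : IsHomotopy H (L.δ (Fin.last _) y) x') :
    ∃ w, AgreeExceptLast w y ∧ L.δ (Fin.last _) w = x' := by
  set Z := L.σ (Fin.last n).castSucc y
  have hZH : ∀ j, j ≠ Fin.last _ → L.δ (Fin.last _) (L.δ j.castSucc Z) = L.δ j H := by
    intro j hj
    obtain ⟨j, rfl⟩ := Fin.exists_castSucc_eq.mpr hj
    rw [δ_last_δ_castSucc_σ, hH.1 j]
  obtain ⟨w, hw, hwlast⟩ := exists_agreeExceptLast_δ_castSucc (Fin.last _) Z
    (fun j => L.δ j.castSucc Z) H (fun _ _ _ => rfl) hZH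
  rw [δ_castSucc_last_σ_castSucc_last] at hw
  exact ⟨w, hw, hwlast.trans hH.2⟩

lemma exists_isHomotopy_δ_last_of_agreeExceptLast [L.OldKanComplex] {n : ℕ}
    {y w : L _⦋n + 1⦌} (hwy : AgreeExceptLast w y) :
    ∃ G, IsHomotopy G (L.δ (Fin.last _) y) (L.δ (Fin.last _) w) := by
  set Z := L.σ (Fin.last n).castSucc y
  have hx : ∀ j, AgreeExceptLast (Fin.lastCases w (fun j => L.δ j.castSucc.castSucc Z) j)
      (L.δ j.castSucc Z) := by
    intro j
    induction j using Fin.lastCases with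
    | last => rwa [Fin.lastCases_last, δ_castSucc_last_σ_castSucc_last]
    | cast j => rw [Fin.lastCases_castSucc]; exact fun _ => rfl
  obtain ⟨G, hG, -⟩ := exists_filler_of_agreeExceptLast (Fin.last _) Z _ w (fun j _ => hx j)
    (fun _ _ h => (h rfl).elim)
  refine ⟨L.δ (Fin.last _) G, fun i => ?_, ?_⟩
  · rw [← Fin.succ_last (n + 1), δ_comp_δ_apply (Fin.le_last _), hG _ (Fin.castSucc_ne_last _),
      Fin.lastCases_castSucc, δ_last_δ_castSucc_σ]
  · rw [← Fin.succ_last (n + 1), ← δ_comp_δ_self_apply, hG _ (Fin.castSucc_ne_last _),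
      Fin.lastCases_last]

end SSet

open CategoryTheory Simplicial SSet

/-- In a Kan complex `L`, if `y, y' : Δ[n+1] → L` are simplices such
that the homotopy classes `[y dⁱ] = [y' dⁱ]` agree for all `i ≠ k`, then also
`[y dᵏ] = [y' dᵏ]`. -/
theorem homotopic_faces (L : SSet.{u}) (hL : OldKanComplex L) {n : ℕ}
    (y y' : L _⦋n + 1⦌) (k : Fin (n + 2))
    (h : ∀ i : Fin (n + 2), i ≠ k → Homotopic L (L.δ i y) (L.δ i y')) :
    Homotopic L (L.δ k y) (L.δ k y') := by
  simp only [homotopic_iff_exists_isHomotopy] at h ⊢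
  have : Nonempty (L _⦋n + 1⦌) := ⟨y⟩
  choose! H hH using h
  induction k using Fin.lastCases with
  | last =>
    obtain ⟨w, hwy, hw⟩ := exists_agreeExceptLast_of_isHomotopy_δ y y' (fun j => H j.castSucc)
      (fun j => hH _ (Fin.castSucc_ne_last j))
    rw [← hw]
    exact exists_isHomotopy_δ_last_of_agreeExceptLast hwy
  | cast k =>
    obtain ⟨w, hwy, hw⟩ :=
      exists_agreeExceptLast_of_isHomotopy_δ_last (hH _ (Fin.castSucc_ne_last k).symm)
    rw [← hwy k]
    refine exists_isHomotopy_δ_castSucc k w y' (fun j => H j.castSucc) (fun j hj => ?_) hw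
    rw [hwy j]
    exact hH _ ((Fin.castSucc_injective _).ne hj)
end
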